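/- Let a = ⟨λ₁,…,λ_k⟩ be as above, and for 0 ≤ t ≤ j let L(j,t) be defined by L(j,j) = (a_{j+1} − a_j)/(Λ−1) and L(j,t) = L(j,t+1) − (Λ_{j-t} − 1)·(a_{t+1} − a_t)/(Λ−1) for 0 ≤ t < j. Then for all 0 ≤ t ≤ j, (Λ−1)·L(j,t) = a_{j+1} + (Λ_{j-t} − 1)·a_t − Σ_{i=1}^{j-t} λ_i a_{j+1-i}. -/

import Mathlib

/-!
Both `(Λ - 1) L(j, ·)` and the closed form satisfy the same downward recurrence in `t` and agree
at `t = j`. For the closed form, lowering `t` by one splits off the last summand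
`λ_{j-t} a_{t+1}`, which together with `Λ_{j-t} = Λ_{j-t-1} + λ_{j-t}` is exactly the change
`(Λ_{j-t} - 1)(a_{t+1} - a_t)`.
-/

/-- `Λ_j = λ₁ + ⋯ + λ_j`. -/
def Lam (lam : ℕ → ℕ) (j : ℕ) : ℕ := ∑ i ∈ Finset.Icc 1 j, lam i

theorem Lam_succ (lam : ℕ → ℕ) (n : ℕ) : Lam lam (n + 1) = Lam lam n + lam (n + 1) :=
  Finset.sum_Icc_succ_top (Nat.le_add_left 1 n) lam

theorem eq_of_downward_recurrence {α : Type*} {f g : ℕ → α} {φ : ℕ → α → α} {j : ℕ}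
    (htop : f j = g j) (hf : ∀ t < j, f t = φ t (f (t + 1)))
    (hg : ∀ t < j, g t = φ t (g (t + 1))) : ∀ t ≤ j, f t = g t := by
  intro t ht
  induction ht using Nat.decreasingInduction with
  | self => exact htop
  | of_succ t ht ih => rw [hf t ht, hg t ht, ih]

def leafCountFormula (lam : ℕ → ℕ) (a : ℤ → ℚ) (j t : ℕ) : ℚ :=
  a (j + 1) + ((Lam lam (j - t) : ℚ) - 1) * a t
    - ∑ i ∈ Finset.Icc 1 (j - t), (lam i : ℚ) * a ((j : ℤ) + 1 - i)

theorem leafCountFormula_self (lam : ℕ → ℕ) (a : ℤ → ℚ) (j : ℕ) :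
    leafCountFormula lam a j j = a (j + 1) - a j := by
  simp [leafCountFormula, Lam, sub_eq_add_neg]

theorem leafCountFormula_of_lt (lam : ℕ → ℕ) (a : ℤ → ℚ) {j t : ℕ} (h : t < j) :
    leafCountFormula lam a j t
      = leafCountFormula lam a j (t + 1) - ((Lam lam (j - t) : ℚ) - 1) * (a (t + 1) - a t) := by
  obtain ⟨d, rfl⟩ := Nat.exists_eq_add_of_lt h
  have hd : t + d + 1 - t = d + 1 := by omega
  have hd' : t + d + 1 - (t + 1) = d := by omega
  have hidx : ((t + d + 1 : ℕ) : ℤ) + 1 - ((d + 1 : ℕ) : ℤ) = ((t + 1 : ℕ) : ℤ) := by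
    push_cast; ring
  simp only [leafCountFormula, hd, hd', Lam_succ,
    Finset.sum_Icc_succ_top (Nat.le_add_left 1 d), hidx]
  push_cast
  ring

theorem stmt8_general (k : ℕ) (lam : ℕ → ℕ)
    (hΛ : 2 ≤ Lam lam k)
    (a : ℤ → ℚ)
    (L : ℕ → ℕ → ℚ)
    (hLjj : ∀ j : ℕ, L j j = (a (j + 1) - a j) / ((Lam lam k : ℚ) - 1))
    (hLrec : ∀ j t : ℕ, t < j →
      L j t = L j (t + 1) -
        ((Lam lam (j - t) : ℚ) - 1) * (a (t + 1) - a t) / ((Lam lam k : ℚ) - 1)) :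
    ∀ j t : ℕ, t ≤ j →
      ((Lam lam k : ℚ) - 1) * L j t
        = a (j + 1) + ((Lam lam (j - t) : ℚ) - 1) * a t
          - ∑ i ∈ Finset.Icc 1 (j - t), (lam i : ℚ) * a ((j : ℤ) + 1 - i) := by
  have hΛQ : (Lam lam k : ℚ) - 1 ≠ 0 := by
    have : (2 : ℚ) ≤ Lam lam k := by exact_mod_cast hΛ
    linarith
  intro j
  refine eq_of_downward_recurrence (g := leafCountFormula lam a j)
    (φ := fun t x ↦ x - ((Lam lam (j - t) : ℚ) - 1) * (a (t + 1) - a t)) ?_ ?_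
    (fun t ht ↦ leafCountFormula_of_lt lam a ht)
  · rw [hLjj, leafCountFormula_self, mul_div_cancel₀ _ hΛQ]
  · intro t ht
    rw [hLrec j t ht, mul_sub, mul_div_cancel₀ _ hΛQ]

/-- with `L(j,j) = (a_{j+1} - a_j)/(Λ-1)` and
`L(j,t) = L(j,t+1) - (Λ_{j-t} - 1)(a_{t+1} - a_t)/(Λ-1)` for `t < j`, we have
`(Λ-1) L(j,t) = a_{j+1} + (Λ_{j-t} - 1) a_t - ∑_{i=1}^{j-t} λ_i a_{j+1-i}`
for all `0 ≤ t ≤ j`. -/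
theorem stmt8 (k : ℕ) (lam : ℕ → ℕ) (hk : 1 ≤ k)
    (h1 : 1 ≤ lam 1) (hkpos : 1 ≤ lam k) (hzero : ∀ i, k < i → lam i = 0)
    (hΛ : 2 ≤ Lam lam k)
    (a : ℤ → ℚ)
    (ha0 : ∀ i : ℤ, i ≤ 0 → a i = 1)
    (harec : ∀ n : ℤ, 1 ≤ n → a n = ∑ i ∈ Finset.Icc 1 k, (lam i : ℚ) * a (n - i))
    (L : ℕ → ℕ → ℚ)
    (hLjj : ∀ j : ℕ, L j j = (a (j + 1) - a j) / ((Lam lam k : ℚ) - 1))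
    (hLrec : ∀ j t : ℕ, t < j →
      L j t = L j (t + 1) -
        ((Lam lam (j - t) : ℚ) - 1) * (a (t + 1) - a t) / ((Lam lam k : ℚ) - 1)) :
    ∀ j t : ℕ, t ≤ j →
      ((Lam lam k : ℚ) - 1) * L j t
        = a (j + 1) + ((Lam lam (j - t) : ℚ) - 1) * a t
          - ∑ i ∈ Finset.Icc 1 (j - t), (lam i : ℚ) * a ((j : ℤ) + 1 - i) :=
  stmt8_general k lam hΛ a L hLjj hLrec
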